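/- arXiv:1703.02054 — 4 statements merged into one kernel-verified Lean document; each statement's English description precedes it below -/
import Mathlib

section
/- If G_a and G_b are independent Gamma(a,1) and Gamma(b,1) random variables, then G_a + G_b is independent of G_a/(G_a+G_b), and G_a+G_b has Gamma(a+b,1) distribution while G_a/(G_a+G_b) has Beta(a,b) distribution. -/
/-!
Write `(X, Y) = (S P, S (1 - P))` with `S = X + Y` and `P = X / (X + Y)`. The map
`(s, p) ↦ (s p, s (1 - p))` is a diffeomorphism from `(0, ∞) × (0, 1)` onto `(0, ∞)²` with
Jacobian `s`, and the transformed density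
`s · (s p)^(a-1) e^(-s p) / Γ(a) · (s (1 - p))^(b-1) e^(-s (1 - p)) / Γ(b)`
factors as the Gamma(a+b,1) density in `s` times the Beta(a,b) density in `p`. A joint law that is
a product measure gives both independence and the marginals.
-/

open MeasureTheory ProbabilityTheory Real Set

/-- The Gamma(a,1) distribution on ℝ, supported on (0,∞). -/
noncomputable def gammaM (a : ℝ) : Measure ℝ :=
  volume.withDensity (fun t => ENNReal.ofReal
    (if 0 < t then t ^ (a - 1) * Real.exp (-t) / Real.Gamma a else 0))

/-- The Beta(a,b) distribution on ℝ, supported on (0,1). -/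
noncomputable def betaM (a b : ℝ) : Measure ℝ :=
  volume.withDensity (fun x => ENNReal.ofReal
    (if 0 < x ∧ x < 1 then
      x ^ (a - 1) * (1 - x) ^ (b - 1) * Real.Gamma (a + b) / (Real.Gamma a * Real.Gamma b)
    else 0))

open scoped ENNReal

section Measure

variable {α β Ω : Type*} [MeasurableSpace α] [MeasurableSpace β] [MeasurableSpace Ω]

theorem withDensity_eq_restrict_withDensity {μ : Measure α} {s : Set α} (hs : MeasurableSet s)
    {f : α → ℝ≥0∞} (hf : ∀ x ∉ s, f x = 0) :
    μ.withDensity f = (μ.restrict s).withDensity f := by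
  rw [← withDensity_indicator hs, indicator_eq_self.2 (Function.support_subset_iff'.2 hf)]

theorem indepFun_and_map_eq_of_map_prod_eq {μ : Measure Ω} {f : Ω → α} {g : Ω → β}
    (hf : Measurable f) (hg : Measurable g) {ν₁ : Measure α} {ν₂ : Measure β}
    [IsProbabilityMeasure ν₁] [IsProbabilityMeasure ν₂]
    (h : μ.map (fun ω => (f ω, g ω)) = ν₁.prod ν₂) :
    IndepFun f g μ ∧ μ.map f = ν₁ ∧ μ.map g = ν₂ := by
  have hfg : Measurable fun ω => (f ω, g ω) := hf.prodMk hg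
  have hf_law : μ.map f = ν₁ := by
    rw [show f = Prod.fst ∘ fun ω => (f ω, g ω) from rfl, ← Measure.map_map measurable_fst hfg,
      h, Measure.map_fst_prod, measure_univ, one_smul]
  have hg_law : μ.map g = ν₂ := by
    rw [show g = Prod.snd ∘ fun ω => (f ω, g ω) from rfl, ← Measure.map_map measurable_snd hfg,
      h, Measure.map_snd_prod, measure_univ, one_smul]
  refine ⟨?_, hf_law, hg_law⟩
  rw [indepFun_iff_map_prod_eq_prod_map_map' hf.aemeasurable hg.aemeasurable
    (by rw [hf_law]; infer_instance) (by rw [hg_law]; infer_instance), hf_law, hg_law, h]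

theorem map_restrict_image_withDensity {E : Type*} [NormedAddCommGroup E] [NormedSpace ℝ E]
    [FiniteDimensional ℝ E] [MeasurableSpace E] [BorelSpace E] (μ : Measure E)
    [μ.IsAddHaarMeasure] {s : Set E} {φ ψ : E → E} {φ' : E → E →L[ℝ] E} (hs : MeasurableSet s)
    (hφ' : ∀ x ∈ s, HasFDerivWithinAt φ (φ' x) s x) (hφ : InjOn φ s) (hψ : Measurable ψ)
    (hψφ : LeftInvOn ψ φ s) (f : E → ℝ≥0∞) :
    ((μ.restrict (φ '' s)).withDensity f).map ψ =
      (μ.restrict s).withDensity fun x => ENNReal.ofReal |(φ' x).det| * f (φ x) := by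
  ext t ht
  rw [Measure.map_apply hψ ht, withDensity_apply _ (hψ ht), withDensity_apply _ ht,
    ← lintegral_indicator (hψ ht), ← lintegral_indicator ht,
    lintegral_image_eq_lintegral_abs_det_fderiv_mul μ hs hφ' hφ]
  refine setLIntegral_congr_fun hs fun x hx => ?_
  by_cases hxt : x ∈ t <;> simp [indicator, hψφ hx, hxt]

end Measure

/-- Unlike Mathlib's `gammaPDFReal a 1`, this vanishes at `0`, so that products of Gamma densities
vanish off the open quadrant on which the change of variables is a diffeomorphism. -/
noncomputable def gammaDensity (a t : ℝ) : ℝ :=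
  if 0 < t then t ^ (a - 1) * exp (-t) / Gamma a else 0

theorem gammaM_eq_withDensity (a : ℝ) :
    gammaM a = volume.withDensity fun t => ENNReal.ofReal (gammaDensity a t) := rfl

theorem measurable_gammaDensity (a : ℝ) : Measurable (gammaDensity a) :=
  Measurable.ite measurableSet_Ioi (by fun_prop) measurable_const

theorem gammaDensity_of_nonpos (a : ℝ) {t : ℝ} (ht : t ≤ 0) : gammaDensity a t = 0 :=
  if_neg ht.not_gt

theorem gammaDensity_nonneg {a : ℝ} (ha : 0 < a) (t : ℝ) : 0 ≤ gammaDensity a t := by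
  have := Gamma_pos_of_pos ha
  unfold gammaDensity
  split_ifs <;> positivity

theorem gammaM_eq_gammaMeasure (a : ℝ) : gammaM a = gammaMeasure a 1 := by
  refine withDensity_congr_ae ?_
  filter_upwards [compl_mem_ae_iff.2 (measure_singleton (0 : ℝ))] with t ht
  rcases lt_or_gt_of_ne (show t ≠ 0 from ht) with ht | ht
  · rw [if_neg ht.not_gt, gammaPDF_of_neg ht, ENNReal.ofReal_zero]
  · rw [if_pos ht, gammaPDF_of_nonneg ht.le]
    simp only [one_rpow, one_mul]
    congr 1
    ring

theorem isProbabilityMeasure_gammaM {a : ℝ} (ha : 0 < a) : IsProbabilityMeasure (gammaM a) :=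
  gammaM_eq_gammaMeasure a ▸ isProbabilityMeasure_gammaMeasure ha one_pos

theorem betaM_eq_betaMeasure (a b : ℝ) : betaM a b = betaMeasure a b := by
  rw [betaM, betaMeasure]
  congr 1
  funext x
  rw [betaPDF, betaPDFReal, beta, one_div_div]
  congr 1
  split_ifs <;> ring

def splitByRatio (q : ℝ × ℝ) : ℝ × ℝ := (q.1 * q.2, q.1 * (1 - q.2))

noncomputable def sumRatio (z : ℝ × ℝ) : ℝ × ℝ := (z.1 + z.2, z.1 / (z.1 + z.2))

noncomputable def splitByRatioDeriv (q : ℝ × ℝ) : ℝ × ℝ →L[ℝ] ℝ × ℝ :=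
  LinearMap.toContinuousLinearMap <| Matrix.toLin (Module.Basis.finTwoProd ℝ)
    (Module.Basis.finTwoProd ℝ) !![q.2, q.1; 1 - q.2, -q.1]

theorem hasFDerivAt_splitByRatio (q : ℝ × ℝ) :
    HasFDerivAt splitByRatio (splitByRatioDeriv q) q := by
  have h := ((hasFDerivAt_fst (𝕜 := ℝ) (p := q)).mul hasFDerivAt_snd).prodMk
    ((hasFDerivAt_fst (𝕜 := ℝ) (p := q)).mul ((hasFDerivAt_const (1 : ℝ) q).sub hasFDerivAt_snd))
  refine h.congr_fderiv ?_
  rw [splitByRatioDeriv, Matrix.toLin_finTwoProd_toContinuousLinearMap]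
  ext <;> simp

theorem det_splitByRatioDeriv (q : ℝ × ℝ) : (splitByRatioDeriv q).det = -q.1 := by
  rw [splitByRatioDeriv, LinearMap.det_toContinuousLinearMap, LinearMap.det_toLin,
    Matrix.det_fin_two_of]
  ring

theorem injOn_splitByRatio : InjOn splitByRatio (Ioi 0 ×ˢ Ioo 0 1) := by
  rintro ⟨s, p⟩ ⟨hs, -⟩ ⟨s', p'⟩ - h
  have hs : 0 < s := hs
  simp only [splitByRatio, Prod.mk.injEq] at h
  have hss' : s = s' := by linarith [h.1, h.2]
  subst hss'
  simp [mul_left_cancel₀ (ne_of_gt hs) h.1]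

theorem image_splitByRatio : splitByRatio '' (Ioi 0 ×ˢ Ioo 0 1) = Ioi 0 ×ˢ Ioi 0 := by
  ext ⟨x, y⟩
  simp only [mem_image, mem_prod, mem_Ioi, mem_Ioo, splitByRatio, Prod.exists, Prod.mk.injEq]
  constructor
  · rintro ⟨s, p, ⟨hs, hp, hp1⟩, rfl, rfl⟩
    exact ⟨mul_pos hs hp, mul_pos hs (by linarith)⟩
  · rintro ⟨hx, hy⟩
    have hxy : 0 < x + y := by linarith
    refine ⟨x + y, x / (x + y), ⟨hxy, div_pos hx hxy, (div_lt_one hxy).2 (by linarith)⟩, ?_, ?_⟩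
    · field_simp
    · field_simp
      ring

theorem leftInvOn_sumRatio_splitByRatio : LeftInvOn sumRatio splitByRatio (Ioi 0 ×ˢ Ioo 0 1) := by
  rintro ⟨s, p⟩ ⟨hs, -⟩
  have hs : 0 < s := hs
  have hsum : s * p + s * (1 - p) = s := by ring
  simp only [sumRatio, splitByRatio, hsum, mul_div_cancel_left₀ _ (ne_of_gt hs)]

theorem measurable_sumRatio : Measurable sumRatio := by
  unfold sumRatio
  fun_prop

theorem mul_gammaDensity_mul_gammaDensity {a b s p : ℝ} (ha : 0 < a) (hb : 0 < b) (hs : 0 < s)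
    (hp : 0 < p) (hp1 : p < 1) :
    s * (gammaDensity a (s * p) * gammaDensity b (s * (1 - p))) =
      gammaDensity (a + b) s * betaPDFReal a b p := by
  have h1p : 0 < 1 - p := by linarith
  have hexp : exp (-(s * p)) * exp (-(s * (1 - p))) = exp (-s) := by
    rw [← exp_add]
    ring_nf
  have hpow : s ^ (a - 1) * s ^ (b - 1) * s = s ^ (a + b - 1) := by
    rw [← rpow_add hs, ← rpow_add_one hs.ne']
    ring_nf
  simp only [gammaDensity, betaPDFReal, beta, if_pos hs, if_pos (mul_pos hs hp),
    if_pos (mul_pos hs h1p), if_pos (And.intro hp hp1), mul_rpow hs.le hp.le,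
    mul_rpow hs.le h1p.le, ← hexp, ← hpow]
  have := Gamma_pos_of_pos ha
  have := Gamma_pos_of_pos hb
  have := Gamma_pos_of_pos (add_pos ha hb)
  field_simp

theorem map_sumRatio_gammaM_prod_gammaM {a b : ℝ} (ha : 0 < a) (hb : 0 < b) :
    ((gammaM a).prod (gammaM b)).map sumRatio = (gammaM (a + b)).prod (betaM a b) := by
  set H : ℝ × ℝ → ℝ≥0∞ :=
    fun z => ENNReal.ofReal (gammaDensity a z.1) * ENNReal.ofReal (gammaDensity b z.2)
  have hH : (gammaM a).prod (gammaM b) = (volume.restrict (Ioi 0 ×ˢ Ioi 0)).withDensity H := by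
    rw [gammaM_eq_withDensity, gammaM_eq_withDensity,
      prod_withDensity (measurable_gammaDensity a).ennreal_ofReal
        (measurable_gammaDensity b).ennreal_ofReal, ← Measure.volume_eq_prod]
    refine withDensity_eq_restrict_withDensity (measurableSet_Ioi.prod measurableSet_Ioi) ?_
    intro z hz
    simp only [mem_prod, mem_Ioi, not_and_or, not_lt] at hz
    rcases hz with hz | hz <;> simp [gammaDensity_of_nonpos _ hz]
  have hG : (gammaM (a + b)).prod (betaM a b) = (volume.restrict (Ioi 0 ×ˢ Ioo 0 1)).withDensity
      fun q => ENNReal.ofReal (gammaDensity (a + b) q.1) * betaPDF a b q.2 := by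
    rw [gammaM_eq_withDensity, betaM_eq_betaMeasure, betaMeasure,
      prod_withDensity (measurable_gammaDensity _).ennreal_ofReal
        (show Measurable (betaPDF a b) from (measurable_betaPDFReal a b).ennreal_ofReal),
      ← Measure.volume_eq_prod]
    refine withDensity_eq_restrict_withDensity (measurableSet_Ioi.prod measurableSet_Ioo) ?_
    intro z hz
    simp only [mem_prod, mem_Ioi, mem_Ioo, not_and_or, not_lt] at hz
    rcases hz with hz | hz | hz
    · simp [gammaDensity_of_nonpos _ hz]
    · simp [betaPDF_eq_zero_of_nonpos hz]
    · simp [betaPDF_eq_zero_of_one_le hz]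
  rw [hH, hG, ← image_splitByRatio, map_restrict_image_withDensity volume
    (measurableSet_Ioi.prod measurableSet_Ioo)
    (fun q _ => (hasFDerivAt_splitByRatio q).hasFDerivWithinAt) injOn_splitByRatio
    measurable_sumRatio leftInvOn_sumRatio_splitByRatio]
  refine withDensity_congr_ae ?_
  filter_upwards [ae_restrict_mem (measurableSet_Ioi.prod measurableSet_Ioo)]
    with ⟨s, p⟩ ⟨hs, hp, hp1⟩
  have hs : 0 < s := hs
  simp only [H, splitByRatio, det_splitByRatioDeriv, abs_neg, abs_of_pos hs, betaPDF]
  rw [← ENNReal.ofReal_mul (gammaDensity_nonneg ha _), ← ENNReal.ofReal_mul hs.le,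
    ← ENNReal.ofReal_mul (gammaDensity_nonneg (add_pos ha hb) _),
    mul_gammaDensity_mul_gammaDensity ha hb hs hp hp1]

theorem beta_gamma_algebra_general
    {Ω : Type*} [MeasureSpace Ω] (μ : Measure Ω)
    (a b : ℝ) (ha : 0 < a) (hb : 0 < b)
    (X Y : Ω → ℝ) (hX : Measurable X) (hY : Measurable Y)
    (hInd : IndepFun X Y μ)
    (hXlaw : μ.map X = gammaM a) (hYlaw : μ.map Y = gammaM b) :
    IndepFun (fun ω => X ω + Y ω) (fun ω => X ω / (X ω + Y ω)) μ ∧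
    μ.map (fun ω => X ω + Y ω) = gammaM (a + b) ∧
    μ.map (fun ω => X ω / (X ω + Y ω)) = betaM a b := by
  have := isProbabilityMeasure_gammaM ha
  have := isProbabilityMeasure_gammaM hb
  have := isProbabilityMeasure_gammaM (add_pos ha hb)
  have : IsProbabilityMeasure (betaM a b) :=
    betaM_eq_betaMeasure a b ▸ isProbabilityMeasureBeta ha hb
  have hXY : μ.map (fun ω => (X ω, Y ω)) = (gammaM a).prod (gammaM b) := by
    rwa [indepFun_iff_map_prod_eq_prod_map_map' hX.aemeasurable hY.aemeasurable
      (hXlaw ▸ inferInstance) (hYlaw ▸ inferInstance), hXlaw, hYlaw] at hInd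
  refine indepFun_and_map_eq_of_map_prod_eq (hX.add hY) (hX.div (hX.add hY)) ?_
  change μ.map (sumRatio ∘ fun ω => (X ω, Y ω)) = _
  rw [← Measure.map_map measurable_sumRatio (hX.prodMk hY), hXY,
    map_sumRatio_gammaM_prod_gammaM ha hb]

theorem beta_gamma_algebra
    {Ω : Type*} [MeasureSpace Ω] (μ : Measure Ω) [IsProbabilityMeasure μ]
    (a b : ℝ) (ha : 0 < a) (hb : 0 < b)
    (X Y : Ω → ℝ) (hX : Measurable X) (hY : Measurable Y)
    (hInd : IndepFun X Y μ)
    (hXlaw : μ.map X = gammaM a) (hYlaw : μ.map Y = gammaM b) :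
    IndepFun (fun ω => X ω + Y ω) (fun ω => X ω / (X ω + Y ω)) μ ∧
    μ.map (fun ω => X ω + Y ω) = gammaM (a + b) ∧
    μ.map (fun ω => X ω / (X ω + Y ω)) = betaM a b :=
  beta_gamma_algebra_general μ a b ha hb X Y hX hY hInd hXlaw hYlaw
end

section
/- Let T₀ be a positive random variable with density f₀, cumulant ψ(s) = -log E[e^{-s T₀}], and E[T₀^{-ν}] < ∞ for some ν > 0. Define a pair (ξ, T) with ξ having density s ↦ e^{-ψ(s)} s^{ν-1} / (E[T₀^{-ν}] Γ(ν)) on (0,∞), and conditional law of T given ξ = s having density t ↦ e^{-st + ψ(s)} f₀(t). Then T is independent of ξT, ξT is Gamma(ν,1) distributed, and T has density t ↦ t^{-ν} f₀(t)/E[T₀^{-ν}]. -/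
open MeasureTheory ProbabilityTheory Real Set

/-!
On `(0,∞)²` the joint density of `(ξ, T)` is `s ^ (ν - 1) e^{-st} f₀(t) / (E Γ(ν))`: the tilt
factors `e^{∓ψ(s)}` cancel. Substituting `u = s t` writes it as
`t · [t ^ (-ν) f₀(t) / E] · [u ^ (ν - 1) e^{-u} / Γ(ν)]`, and `t` is exactly the Jacobian of
`(s, t) ↦ (t, s t)`. So the law of `(T, ξ T)` is a product measure, which gives the independence
and both marginals at once.
-/

open scoped ENNReal

theorem Real.ofReal_abs_mul_lintegral_comp_mul_right (f : ℝ → ℝ≥0∞) {t : ℝ} (ht : t ≠ 0) :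
    ENNReal.ofReal |t| * ∫⁻ s, f (s * t) = ∫⁻ u, f u := by
  have hmap := lintegral_map_equiv (μ := volume) f (Homeomorph.mulRight₀ t ht).toMeasurableEquiv
  conv_rhs => rw [← Real.smul_map_volume_mul_right ht, lintegral_smul_measure]
  exact congrArg _ hmap.symm

theorem map_withDensity_scaling_eq_prod {a b : ℝ → ℝ≥0∞} (ha : AEMeasurable a)
    (hb : Measurable b) [SigmaFinite (volume.withDensity a)]
    [SigmaFinite (volume.withDensity b)] :
    ((volume : Measure (ℝ × ℝ)).withDensity
        (fun p => ENNReal.ofReal |p.2| * (a p.2 * b (p.1 * p.2)))).map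
      (fun p => (p.2, p.1 * p.2)) =
      (volume.withDensity a).prod (volume.withDensity b) := by
  refine (Measure.prod_eq fun A B hA hB => ?_).symm
  have hφ : Measurable fun p : ℝ × ℝ => (p.2, p.1 * p.2) := by fun_prop
  have hφAB : MeasurableSet ((fun p : ℝ × ℝ => (p.2, p.1 * p.2)) ⁻¹' (A ×ˢ B)) := hφ (hA.prod hB)
  have hindicator : ((fun p : ℝ × ℝ => (p.2, p.1 * p.2)) ⁻¹' (A ×ˢ B)).indicator
      (fun p => ENNReal.ofReal |p.2| * (a p.2 * b (p.1 * p.2))) =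
      fun p => A.indicator a p.2 * (ENNReal.ofReal |p.2| * B.indicator b (p.1 * p.2)) := by
    ext p
    by_cases hA' : p.2 ∈ A <;> by_cases hB' : p.1 * p.2 ∈ B <;> simp [indicator, hA', hB']
    ring
  have hinner : ∀ᵐ t : ℝ,
      ∫⁻ s, A.indicator a t * (ENNReal.ofReal |t| * B.indicator b (s * t)) =
        A.indicator a t * volume.withDensity b B := by
    filter_upwards [Measure.ae_ne volume 0] with t ht
    rw [lintegral_const_mul _ (by fun_prop), lintegral_const_mul' _ _ ENNReal.ofReal_ne_top,
      Real.ofReal_abs_mul_lintegral_comp_mul_right _ ht, lintegral_indicator hB,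
      withDensity_apply _ hB]
  rw [Measure.map_apply hφ (hA.prod hB), withDensity_apply _ hφAB, ← lintegral_indicator hφAB,
    hindicator, Measure.volume_eq_prod, lintegral_prod_symm _ ?_, lintegral_congr_ae hinner,
    lintegral_mul_const'' _ (ha.indicator hA), lintegral_indicator hA, withDensity_apply _ hA]
  exact (ha.indicator hA).comp_snd.mul (by fun_prop)

theorem indepFun_and_map_eq_of_map_prod_eq_prod {Ω α β : Type*} [MeasurableSpace Ω]
    [MeasurableSpace α] [MeasurableSpace β] {μ : Measure Ω} [IsProbabilityMeasure μ]
    {X : Ω → α} {Y : Ω → β} (hX : AEMeasurable X μ) (hY : AEMeasurable Y μ)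
    {ν₁ : Measure α} {ν₂ : Measure β} [IsProbabilityMeasure ν₂]
    (h : μ.map (fun ω => (X ω, Y ω)) = ν₁.prod ν₂) :
    IndepFun X Y μ ∧ μ.map X = ν₁ ∧ μ.map Y = ν₂ := by
  have hX' : μ.map X = ν₁ := by rw [← Measure.fst_map_prodMk₀ hY, h, Measure.fst_prod]
  have : IsProbabilityMeasure ν₁ := hX' ▸ Measure.isProbabilityMeasure_map hX
  have hY' : μ.map Y = ν₂ := by rw [← Measure.snd_map_prodMk₀ hX, h, Measure.snd_prod]
  exact ⟨(indepFun_iff_map_prod_eq_prod_map_map hX hY).2 (by rw [h, hX', hY']), hX', hY'⟩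

theorem ofReal_tilted_joint_density_eq (ψ f₀ : ℝ → ℝ) {ν : ℝ} (hν : 0 < ν) (E s t : ℝ) :
    ENNReal.ofReal (if 0 < s ∧ 0 < t then
        (Real.exp (-(ψ s)) * s ^ (ν - 1) / (E * Real.Gamma ν)) *
          (Real.exp (-(s * t) + ψ s) * f₀ t) else 0) =
      ENNReal.ofReal |t| * (ENNReal.ofReal (if 0 < t then t ^ (-ν) * f₀ t / E else 0) *
        ENNReal.ofReal (if 0 < s * t then
          (s * t) ^ (ν - 1) * Real.exp (-(s * t)) / Real.Gamma ν else 0)) := by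
  rcases le_or_gt t 0 with ht | ht
  · simp [ht.not_gt]
  rcases le_or_gt s 0 with hs | hs
  · simp [hs.not_gt, (mul_nonpos_of_nonpos_of_nonneg hs ht.le).not_gt]
  have hgamma : 0 ≤ (s * t) ^ (ν - 1) * Real.exp (-(s * t)) / Real.Gamma ν := by
    have := Real.Gamma_pos_of_pos hν
    positivity
  rw [if_pos ⟨hs, ht⟩, if_pos ht, if_pos (mul_pos hs ht), ← ENNReal.ofReal_mul' hgamma,
    ← ENNReal.ofReal_mul (abs_nonneg t), abs_of_pos ht, mul_rpow hs.le ht.le]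
  have hpow : t * (t ^ (-ν) * t ^ (ν - 1)) = 1 := by
    rw [← rpow_add ht, show -ν + (ν - 1) = -1 by ring, rpow_neg_one, mul_inv_cancel₀ ht.ne']
  have hexp : Real.exp (-(ψ s)) * Real.exp (-(s * t) + ψ s) = Real.exp (-(s * t)) := by
    rw [← Real.exp_add]; ring_nf
  congr 1
  linear_combination (s ^ (ν - 1) * f₀ t / (E * Real.Gamma ν)) * hexp -
    (s ^ (ν - 1) * Real.exp (-(s * t)) * f₀ t / (E * Real.Gamma ν)) * hpow

theorem independence_by_random_scaling_forward_general
    {Ω : Type*} [MeasureSpace Ω] (μ : Measure Ω) [IsProbabilityMeasure μ]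
    (ν : ℝ) (hν : 0 < ν)
    (f₀ : ℝ → ℝ)
    -- E := E[T₀^{-ν}] < ∞, expressed via integrability and its value:
    (E : ℝ)
    (hEint : IntegrableOn (fun t => t ^ (-ν) * f₀ t) (Ioi 0))
    -- the cumulant function of T₀:
    (ψ : ℝ → ℝ)
    (ξ T : Ω → ℝ) (hξ : Measurable ξ) (hT : Measurable T)
    -- the joint law of (ξ,T): marginal density of ξ times the conditional (tilted) density of T,
    -- i.e. joint density (s,t) ↦ [e^{-ψ(s)} s^{ν-1}/(E Γ(ν))] ⬝ [e^{-st+ψ(s)} f₀(t)] on (0,∞)²: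
    (hjoint : μ.map (fun ω => (ξ ω, T ω)) =
      (volume : Measure (ℝ × ℝ)).withDensity (fun p => ENNReal.ofReal
        (if 0 < p.1 ∧ 0 < p.2 then
          (Real.exp (-(ψ p.1)) * p.1 ^ (ν - 1) / (E * Real.Gamma ν)) *
            (Real.exp (-(p.1 * p.2) + ψ p.1) * f₀ p.2)
        else 0))) :
    IndepFun T (fun ω => ξ ω * T ω) μ ∧
    μ.map (fun ω => ξ ω * T ω) = gammaM ν ∧
    μ.map T = volume.withDensity (fun t => ENNReal.ofReal
      (if 0 < t then t ^ (-ν) * f₀ t / E else 0)) := by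
  have ha : AEMeasurable fun t : ℝ =>
      ENNReal.ofReal (if 0 < t then t ^ (-ν) * f₀ t / E else 0) :=
    ((aemeasurable_indicator_iff measurableSet_Ioi).2
      (hEint.aemeasurable.div_const E)).ennreal_ofReal
  have hb : Measurable fun u : ℝ =>
      ENNReal.ofReal (if 0 < u then u ^ (ν - 1) * Real.exp (-u) / Real.Gamma ν else 0) :=
    (Measurable.ite measurableSet_Ioi (by fun_prop) measurable_const).ennreal_ofReal
  have hlaw : μ.map (fun ω => (T ω, ξ ω * T ω)) =
      (volume.withDensity fun t => ENNReal.ofReal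
        (if 0 < t then t ^ (-ν) * f₀ t / E else 0)).prod (gammaM ν) := by
    rw [show (fun ω => (T ω, ξ ω * T ω)) = (fun p : ℝ × ℝ => (p.2, p.1 * p.2)) ∘
      (fun ω => (ξ ω, T ω)) from rfl, ← Measure.map_map (by fun_prop) (hξ.prodMk hT), hjoint]
    simp_rw [ofReal_tilted_joint_density_eq ψ f₀ hν E]
    exact (map_withDensity_scaling_eq_prod ha hb :)
  have := isProbabilityMeasure_gammaM hν
  obtain ⟨hindep, hTlaw, hξTlaw⟩ :=
    indepFun_and_map_eq_of_map_prod_eq_prod hT.aemeasurable (hξ.mul hT).aemeasurable hlaw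
  exact ⟨hindep, hξTlaw, hTlaw⟩

theorem independence_by_random_scaling_forward
    {Ω : Type*} [MeasureSpace Ω] (μ : Measure Ω) [IsProbabilityMeasure μ]
    (ν : ℝ) (hν : 0 < ν)
    (f₀ : ℝ → ℝ) (hf₀nn : ∀ t, 0 ≤ f₀ t)
    (hf₀dens : ∫ t in Ioi (0:ℝ), f₀ t = 1)
    -- E := E[T₀^{-ν}] < ∞, expressed via integrability and its value:
    (E : ℝ) (hE : ∫ t in Ioi (0:ℝ), t ^ (-ν) * f₀ t = E) (hEpos : 0 < E)
    (hEint : IntegrableOn (fun t => t ^ (-ν) * f₀ t) (Ioi 0))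
    -- the cumulant function of T₀:
    (ψ : ℝ → ℝ) (hψ : ∀ s, ψ s = -Real.log (∫ t in Ioi (0:ℝ), Real.exp (-(s * t)) * f₀ t))
    (ξ T : Ω → ℝ) (hξ : Measurable ξ) (hT : Measurable T)
    -- the joint law of (ξ,T): marginal density of ξ times the conditional (tilted) density of T,
    -- i.e. joint density (s,t) ↦ [e^{-ψ(s)} s^{ν-1}/(E Γ(ν))] ⬝ [e^{-st+ψ(s)} f₀(t)] on (0,∞)²:
    (hjoint : μ.map (fun ω => (ξ ω, T ω)) =
      (volume : Measure (ℝ × ℝ)).withDensity (fun p => ENNReal.ofReal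
        (if 0 < p.1 ∧ 0 < p.2 then
          (Real.exp (-(ψ p.1)) * p.1 ^ (ν - 1) / (E * Real.Gamma ν)) *
            (Real.exp (-(p.1 * p.2) + ψ p.1) * f₀ p.2)
        else 0))) :
    IndepFun T (fun ω => ξ ω * T ω) μ ∧
    μ.map (fun ω => ξ ω * T ω) = gammaM ν ∧
    μ.map T = volume.withDensity (fun t => ENNReal.ofReal
      (if 0 < t then t ^ (-ν) * f₀ t / E else 0)) :=
  independence_by_random_scaling_forward_general μ ν hν f₀ E hEint ψ ξ T hξ hT hjoint
end

section
/- Let T₀ be a positive random variable with density f₀, cumulant ψ, and E[T₀^{-ν}] < ∞. Suppose (ξ, T) are positive absolutely continuous random variables such that T is independent of ξT, ξT has Gamma(ν,1) distribution, and T has density t ↦ t^{-ν} f₀(t)/E[T₀^{-ν}]. Then ξ has density s ↦ e^{-ψ(s)} s^{ν-1}/(E[T₀^{-ν}] Γ(ν)), and the conditional density of T given ξ = s is t ↦ e^{-st+ψ(s)} f₀(t). -/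
open MeasureTheory ProbabilityTheory Real Set

/-!
Independence makes the law of `(T, ξT)` the product of the law of `T`, with density
`t^{-ν} f₀(t) / E`, and the Gamma law. As `(ξ, T)` is the image of `(T, ξT)` under
`(t, y) ↦ (y / t, t)`, whose inverse `(s, t) ↦ (t, ts)` has Jacobian `t`, the pair `(ξ, T)`
has density
`t^{-ν} f₀(t) / E · t · (ts)^{ν-1} e^{-ts} / Γ(ν) = s^{ν-1} e^{-st} f₀(t) / (E Γ(ν))`.
Integrating out `t` produces the Laplace transform `e^{-ψ(s)}` of `f₀`, hence the law of `ξ`,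
and dividing by it leaves the exponential tilt `e^{-st+ψ(s)} f₀(t)`.
-/

open scoped ENNReal

theorem ofReal_abs_mul_lintegral_comp_mul_left (f : ℝ → ℝ≥0∞) {a : ℝ} (ha : a ≠ 0) :
    ENNReal.ofReal |a| * ∫⁻ x, f (a * x) = ∫⁻ x, f x := by
  conv_rhs => rw [← Real.smul_map_volume_mul_left ha]
  rw [lintegral_smul_measure, (measurableEmbedding_mulLeft₀ ha).lintegral_map,
    smul_eq_mul]

theorem map_ratio_prod_withDensity {a b : ℝ → ℝ≥0∞} (ha : Measurable a) (hb : Measurable b) :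
    ((volume.withDensity a).prod (volume.withDensity b)).map (fun p => (p.2 / p.1, p.1)) =
      volume.withDensity (fun p : ℝ × ℝ => a p.2 * ENNReal.ofReal |p.2| * b (p.2 * p.1)) := by
  refine Measure.ext_of_lintegral _ fun f hf => ?_
  have hdens : Measurable fun p : ℝ × ℝ => a p.2 * ENNReal.ofReal |p.2| * b (p.2 * p.1) := by
    fun_prop
  rw [lintegral_map hf (by fun_prop), prod_withDensity ha hb,
    lintegral_withDensity_eq_lintegral_mul _ (by fun_prop) (by fun_prop),
    lintegral_withDensity_eq_lintegral_mul _ hdens hf, Measure.volume_eq_prod,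
    lintegral_prod _ (by fun_prop), lintegral_prod_symm _ (by fun_prop)]
  refine lintegral_congr_ae ?_
  -- substitute `y = t * s` in the inner integral, off the null line `t = 0`
  filter_upwards [Measure.ae_ne volume 0] with t ht
  rw [← ofReal_abs_mul_lintegral_comp_mul_left _ ht, ← lintegral_const_mul _ (by fun_prop)]
  refine lintegral_congr fun s => ?_
  simp only [Pi.mul_apply, mul_div_cancel_left₀ s ht]
  ring

theorem map_fst_withDensity_prod {α β : Type*} [MeasurableSpace α] [MeasurableSpace β]
    {μ : Measure α} {ν : Measure β} [SFinite ν] {f : α × β → ℝ≥0∞} (hf : Measurable f) :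
    ((μ.prod ν).withDensity f).map Prod.fst = μ.withDensity (fun x => ∫⁻ y, f (x, y) ∂ν) := by
  refine Measure.ext_of_lintegral _ fun g hg => ?_
  rw [lintegral_map hg measurable_fst, lintegral_withDensity_eq_lintegral_mul _ hf (by fun_prop),
    lintegral_withDensity_eq_lintegral_mul _ hf.lintegral_prod_right' hg,
    lintegral_prod _ (by fun_prop)]
  refine lintegral_congr fun x => ?_
  simp only [Pi.mul_apply]
  rw [lintegral_mul_const _ (by fun_prop)]

theorem map_ratio_pair_eq_of_indepFun {Ω : Type*} [MeasurableSpace Ω] {μ : Measure Ω}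
    [IsFiniteMeasure μ] {X Y Z : Ω → ℝ} (hX : Measurable X) (hY : Measurable Y)
    (hXY : IndepFun X Y μ) (hZ : ∀ᵐ ω ∂μ, Z ω = Y ω / X ω) :
    μ.map (fun ω => (Z ω, X ω)) = ((μ.map X).prod (μ.map Y)).map (fun p => (p.2 / p.1, p.1)) := by
  rw [← (indepFun_iff_map_prod_eq_prod_map_map hX.aemeasurable hY.aemeasurable).mp hXY,
    Measure.map_map (by fun_prop) (by fun_prop)]
  refine Measure.map_congr ?_
  filter_upwards [hZ] with ω hω
  simp [hω]

noncomputable def laplace (f : ℝ → ℝ) (s : ℝ) : ℝ := ∫ t in Ioi 0, exp (-(s * t)) * f t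

theorem integrableOn_exp_neg_mul_mul {f : ℝ → ℝ} (hf : IntegrableOn f (Ioi 0)) {s : ℝ}
    (hs : 0 ≤ s) : IntegrableOn (fun t => exp (-(s * t)) * f t) (Ioi 0) := by
  refine hf.bdd_mul (c := 1) (by fun_prop) ?_
  refine (ae_restrict_iff' measurableSet_Ioi).2 (ae_of_all _ fun t ht => ?_)
  rw [norm_of_nonneg (exp_pos _).le, exp_le_one_iff, neg_nonpos]
  exact mul_nonneg hs (le_of_lt ht)

theorem laplace_pos {f : ℝ → ℝ} (hf : ∀ t, 0 ≤ f t) (hf1 : ∫ t in Ioi 0, f t = 1) {s : ℝ}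
    (hs : 0 ≤ s) : 0 < laplace f s := by
  have hint : IntegrableOn f (Ioi 0) := .of_integral_ne_zero (by simp [hf1])
  have hsupp : Function.support (fun t => exp (-(s * t)) * f t) = Function.support f := by
    ext t; simp [exp_ne_zero]
  rw [laplace, integral_pos_iff_support_of_nonneg (fun t => mul_nonneg (exp_pos _).le (hf t))
    (integrableOn_exp_neg_mul_mul hint hs), hsupp,
    ← integral_pos_iff_support_of_nonneg hf hint, hf1]
  exact one_pos

section JointDensity

noncomputable def jointDensity (ν E : ℝ) (f : ℝ → ℝ) (p : ℝ × ℝ) : ℝ :=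
  if 0 < p.1 ∧ 0 < p.2 then p.1 ^ (ν - 1) * exp (-(p.1 * p.2)) * f p.2 / (E * Gamma ν) else 0

variable {ν E : ℝ} {f : ℝ → ℝ}

theorem measurable_jointDensity (hf : Measurable f) : Measurable (jointDensity ν E f) := by
  unfold jointDensity
  refine Measurable.ite ?_ (by fun_prop) measurable_const
  exact (measurable_fst measurableSet_Ioi).inter (measurable_snd measurableSet_Ioi)

theorem ofReal_mul_abs_mul_gammaDensity_eq_jointDensity (hE : 0 ≤ E) (hf : ∀ t, 0 ≤ f t)
    (s t : ℝ) :
    ENNReal.ofReal (if 0 < t then t ^ (-ν) * f t / E else 0) * ENNReal.ofReal |t| *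
      ENNReal.ofReal (if 0 < t * s then (t * s) ^ (ν - 1) * exp (-(t * s)) / Gamma ν else 0) =
      ENNReal.ofReal (jointDensity ν E f (s, t)) := by
  rcases le_or_gt t 0 with ht | ht
  · simp [jointDensity, not_lt.2 ht]
  rcases le_or_gt s 0 with hs | hs
  · simp [jointDensity, not_lt.2 hs, not_lt.2 (mul_nonpos_of_nonneg_of_nonpos ht.le hs)]
  have hdens : 0 ≤ t ^ (-ν) * f t / E := by have := hf t; positivity
  have hpow : t ^ (-ν) * t * (t * s) ^ (ν - 1) = s ^ (ν - 1) := by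
    have hcancel : t ^ (-ν) * t ^ (ν - 1) * t = 1 := by
      rw [← rpow_add ht, ← rpow_add_one ht.ne', show -ν + (ν - 1) + 1 = 0 by ring, rpow_zero]
    calc t ^ (-ν) * t * (t * s) ^ (ν - 1)
        = (t ^ (-ν) * t ^ (ν - 1) * t) * s ^ (ν - 1) := by rw [mul_rpow ht.le hs.le]; ring
      _ = s ^ (ν - 1) := by rw [hcancel, one_mul]
  simp only [jointDensity, if_pos ht, if_pos (mul_pos ht hs), if_pos (And.intro hs ht),
    abs_of_pos ht, ← ENNReal.ofReal_mul hdens, ← ENNReal.ofReal_mul (mul_nonneg hdens ht.le)]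
  congr 1
  rw [mul_comm s t, ← hpow]
  ring

theorem map_pair_eq_withDensity_jointDensity {Ω : Type*} [MeasurableSpace Ω] {μ : Measure Ω}
    [IsFiniteMeasure μ] (hE : 0 ≤ E) (hf : Measurable f) (hfnn : ∀ t, 0 ≤ f t) {ξ T : Ω → ℝ}
    (hξ : Measurable ξ) (hT : Measurable T) (hTpos : ∀ᵐ ω ∂μ, 0 < T ω)
    (hInd : IndepFun T (fun ω => ξ ω * T ω) μ)
    (hGamma : μ.map (fun ω => ξ ω * T ω) = gammaM ν)
    (hTlaw : μ.map T = volume.withDensity (fun t => ENNReal.ofReal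
      (if 0 < t then t ^ (-ν) * f t / E else 0))) :
    μ.map (fun ω => (ξ ω, T ω)) =
      volume.withDensity (fun p => ENNReal.ofReal (jointDensity ν E f p)) := by
  have hξ_eq : ∀ᵐ ω ∂μ, ξ ω = ξ ω * T ω / T ω :=
    hTpos.mono fun ω hω => (mul_div_cancel_right₀ _ hω.ne').symm
  rw [map_ratio_pair_eq_of_indepFun (Y := fun ω => ξ ω * T ω) hT (by fun_prop) hInd hξ_eq,
    hGamma, gammaM, hTlaw,
    map_ratio_prod_withDensity
      (Measurable.ite measurableSet_Ioi (by fun_prop) measurable_const).ennreal_ofReal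
      (Measurable.ite measurableSet_Ioi (by fun_prop) measurable_const).ennreal_ofReal]
  simp only [ofReal_mul_abs_mul_gammaDensity_eq_jointDensity hE hfnn]

theorem lintegral_jointDensity (hν : 0 < ν) (hE : 0 ≤ E) (hf : ∀ t, 0 ≤ f t)
    (hfint : IntegrableOn f (Ioi 0)) (s : ℝ) :
    ∫⁻ t, ENNReal.ofReal (jointDensity ν E f (s, t)) =
      ENNReal.ofReal (if 0 < s then laplace f s * s ^ (ν - 1) / (E * Gamma ν) else 0) := by
  rcases le_or_gt s 0 with hs | hs
  · simp [jointDensity, not_lt.2 hs]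
  have hc : 0 ≤ s ^ (ν - 1) / (E * Gamma ν) := by
    have := Gamma_pos_of_pos hν
    positivity
  have hind : (fun t => ENNReal.ofReal (jointDensity ν E f (s, t))) =
      (Ioi 0).indicator fun t =>
        ENNReal.ofReal (s ^ (ν - 1) / (E * Gamma ν) * (exp (-(s * t)) * f t)) := by
    ext t
    by_cases ht : 0 < t
    · simp only [jointDensity, hs, ht, and_self, if_true, indicator_of_mem (mem_Ioi.2 ht)]
      congr 1
      ring
    · simp [jointDensity, ht]
  rw [hind, lintegral_indicator measurableSet_Ioi, ← ofReal_integral_eq_lintegral_ofReal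
      ((integrableOn_exp_neg_mul_mul hfint hs.le).const_mul _)
      (ae_of_all _ fun t => mul_nonneg hc (mul_nonneg (exp_pos _).le (hf t))),
    integral_const_mul, if_pos hs, laplace]
  congr 1
  ring

theorem map_fst_withDensity_jointDensity (hν : 0 < ν) (hE : 0 ≤ E) (hf : Measurable f)
    (hfnn : ∀ t, 0 ≤ f t) (hfint : IntegrableOn f (Ioi 0)) :
    (volume.withDensity fun p => ENNReal.ofReal (jointDensity ν E f p)).map Prod.fst =
      volume.withDensity fun s => ENNReal.ofReal
        (if 0 < s then laplace f s * s ^ (ν - 1) / (E * Gamma ν) else 0) := by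
  rw [Measure.volume_eq_prod, map_fst_withDensity_prod (measurable_jointDensity hf).ennreal_ofReal]
  simp only [lintegral_jointDensity hν hE hfnn hfint]

theorem jointDensity_eq_mul_exp_tilt (c : ℝ) (p : ℝ × ℝ) :
    jointDensity ν E f p = if 0 < p.1 ∧ 0 < p.2 then
      (exp (-c) * p.1 ^ (ν - 1) / (E * Gamma ν)) * (exp (-(p.1 * p.2) + c) * f p.2) else 0 := by
  have hexp : exp (-c) * exp (-(p.1 * p.2) + c) = exp (-(p.1 * p.2)) := by
    rw [← exp_add]
    congr 1
    ring
  unfold jointDensity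
  split_ifs
  · rw [← hexp]; ring
  · rfl

end JointDensity

theorem independence_by_random_scaling_converse_general
    {Ω : Type*} [MeasureSpace Ω] (μ : Measure Ω) [IsProbabilityMeasure μ]
    (ν : ℝ) (hν : 0 < ν)
    (f₀ : ℝ → ℝ) (hf₀nn : ∀ t, 0 ≤ f₀ t)
    (hf₀dens : ∫ t in Ioi (0:ℝ), f₀ t = 1)
    (E : ℝ) (hEpos : 0 < E)
    (ψ : ℝ → ℝ) (hψ : ∀ s, ψ s = -Real.log (∫ t in Ioi (0:ℝ), Real.exp (-(s * t)) * f₀ t))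
    (ξ T : Ω → ℝ) (hξ : Measurable ξ) (hT : Measurable T)
    (hTpos : ∀ᵐ ω ∂μ, 0 < T ω)
    -- the independence and distributional assumptions:
    (hInd : IndepFun T (fun ω => ξ ω * T ω) μ)
    (hGamma : μ.map (fun ω => ξ ω * T ω) = gammaM ν)
    (hTlaw : μ.map T = volume.withDensity (fun t => ENNReal.ofReal
      (if 0 < t then t ^ (-ν) * f₀ t / E else 0))) :
    -- conclusion: ξ has the stated density, and the joint law factorizes as
    -- marginal of ξ times the exponential tilt of f₀ (the conditional density of T given ξ = s):
    μ.map ξ = volume.withDensity (fun s => ENNReal.ofReal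
      (if 0 < s then Real.exp (-(ψ s)) * s ^ (ν - 1) / (E * Real.Gamma ν) else 0)) ∧
    μ.map (fun ω => (ξ ω, T ω)) =
      (volume : Measure (ℝ × ℝ)).withDensity (fun p => ENNReal.ofReal
        (if 0 < p.1 ∧ 0 < p.2 then
          (Real.exp (-(ψ p.1)) * p.1 ^ (ν - 1) / (E * Real.Gamma ν)) *
            (Real.exp (-(p.1 * p.2) + ψ p.1) * f₀ p.2)
        else 0)) := by
  have hf₀int : IntegrableOn f₀ (Ioi 0) := .of_integral_ne_zero (by simp [hf₀dens])
  -- `f₀` need not be measurable, so we pass to a measurable version `f`.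
  obtain ⟨f, hf, hfnn, hf₀f⟩ := hf₀int.aemeasurable.exists_measurable_nonneg (ae_of_all _ hf₀nn)
  have hf₀f' : ∀ᵐ t, 0 < t → f₀ t = f t := (ae_restrict_iff' measurableSet_Ioi).1 hf₀f
  have hTlaw' : μ.map T = volume.withDensity (fun t => ENNReal.ofReal
      (if 0 < t then t ^ (-ν) * f t / E else 0)) :=
    hTlaw.trans <| withDensity_congr_ae <| hf₀f'.mono fun t ht => by
      beta_reduce; split_ifs with h0 <;> simp [ht, h0]
  have hjoint :=
    map_pair_eq_withDensity_jointDensity hEpos.le hf hfnn hξ hT hTpos hInd hGamma hTlaw'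
  constructor
  · have hexp : ∀ s, 0 < s → exp (-ψ s) = laplace f s := fun s hs => by
      have hfdens : ∫ t in Ioi 0, f t = 1 := (integral_congr_ae hf₀f).symm.trans hf₀dens
      have hlaplace : laplace f₀ s = laplace f s :=
        integral_congr_ae (hf₀f.mono fun t ht => by simp only [ht])
      rw [hψ, neg_neg, ← laplace, hlaplace, exp_log (laplace_pos hfnn hfdens hs.le)]
    rw [show μ.map ξ = (μ.map fun ω => (ξ ω, T ω)).map Prod.fst by
        rw [Measure.map_map measurable_fst (hξ.prodMk hT)]; rfl,
      hjoint, map_fst_withDensity_jointDensity hν hEpos.le hf hfnn (hf₀int.congr_fun_ae hf₀f)]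
    congr with s
    split_ifs with hs
    · rw [hexp s hs]
    · rfl
  · rw [hjoint, Measure.volume_eq_prod]
    refine withDensity_congr_ae ?_
    filter_upwards [Measure.quasiMeasurePreserving_snd.ae hf₀f'] with p hp
    rw [jointDensity_eq_mul_exp_tilt (ψ p.1)]
    split_ifs with hpos
    · rw [hp hpos.2]
    · rfl

theorem independence_by_random_scaling_converse
    {Ω : Type*} [MeasureSpace Ω] (μ : Measure Ω) [IsProbabilityMeasure μ]
    (ν : ℝ) (hν : 0 < ν)
    (f₀ : ℝ → ℝ) (hf₀nn : ∀ t, 0 ≤ f₀ t)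
    (hf₀dens : ∫ t in Ioi (0:ℝ), f₀ t = 1)
    (E : ℝ) (hE : ∫ t in Ioi (0:ℝ), t ^ (-ν) * f₀ t = E) (hEpos : 0 < E)
    (hEint : IntegrableOn (fun t => t ^ (-ν) * f₀ t) (Ioi 0))
    (ψ : ℝ → ℝ) (hψ : ∀ s, ψ s = -Real.log (∫ t in Ioi (0:ℝ), Real.exp (-(s * t)) * f₀ t))
    (ξ T : Ω → ℝ) (hξ : Measurable ξ) (hT : Measurable T)
    (hξpos : ∀ᵐ ω ∂μ, 0 < ξ ω) (hTpos : ∀ᵐ ω ∂μ, 0 < T ω)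
    -- absolute continuity: the joint law of (ξ,T) has a Lebesgue density g on (0,∞)²:
    (g : ℝ × ℝ → ℝ) (hg : Measurable g) (hgnn : ∀ p, 0 ≤ g p)
    (habs : μ.map (fun ω => (ξ ω, T ω)) =
      (volume : Measure (ℝ × ℝ)).withDensity (fun p => ENNReal.ofReal (g p)))
    -- the independence and distributional assumptions:
    (hInd : IndepFun T (fun ω => ξ ω * T ω) μ)
    (hGamma : μ.map (fun ω => ξ ω * T ω) = gammaM ν)
    (hTlaw : μ.map T = volume.withDensity (fun t => ENNReal.ofReal
      (if 0 < t then t ^ (-ν) * f₀ t / E else 0))) :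
    -- conclusion: ξ has the stated density, and the joint law factorizes as
    -- marginal of ξ times the exponential tilt of f₀ (the conditional density of T given ξ = s):
    μ.map ξ = volume.withDensity (fun s => ENNReal.ofReal
      (if 0 < s then Real.exp (-(ψ s)) * s ^ (ν - 1) / (E * Real.Gamma ν) else 0)) ∧
    μ.map (fun ω => (ξ ω, T ω)) =
      (volume : Measure (ℝ × ℝ)).withDensity (fun p => ENNReal.ofReal
        (if 0 < p.1 ∧ 0 < p.2 then
          (Real.exp (-(ψ p.1)) * p.1 ^ (ν - 1) / (E * Real.Gamma ν)) *
            (Real.exp (-(p.1 * p.2) + ψ p.1) * f₀ p.2)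
        else 0)) :=
  independence_by_random_scaling_converse_general μ ν hν f₀ hf₀nn hf₀dens E hEpos ψ hψ ξ T hξ hT
    hTpos hInd hGamma hTlaw
end

section
/- For α ∈ (0,1), ν > 0, b > 0 with δ := α - ν ∈ (0,α), the Lévy density λ(s) = (α/Γ(1-α)) s^{ν-α-1} e^{-bs} has Lévy exponent Ψ_ν(b) := ∫₀^∞ (1-e^{-s}) λ(s) ds = (α Γ(1-δ))/(δ Γ(1-α)) ((b+1)^δ - b^δ). -/
/-!
Integrate by parts. The boundary term `(1 - e^{-s}) s^{-δ} e^{-bs}` vanishes at `0` (it is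
`O(s^{1-δ})`) and at `∞`, and its derivative is
`(b+1) s^{-δ} e^{-(b+1)s} - b s^{-δ} e^{-bs} - δ (1 - e^{-s}) s^{-δ-1} e^{-bs}`.
Hence `δ` times the integral equals a difference of two Gamma integrals
`r ∫ s^{-δ} e^{-rs} ds = r^δ Γ(1-δ)`, taken at `r = b + 1` and `r = b`.
-/

open MeasureTheory Real Set Filter Topology

lemma integrableOn_rpow_neg_mul_exp_neg_mul {d r : ℝ} (hd : d < 1) (hr : 0 < r) :
    IntegrableOn (fun t : ℝ => t ^ (-d) * exp (-(r * t))) (Ioi 0) := by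
  simpa [neg_mul] using
    integrableOn_rpow_mul_exp_neg_mul_rpow (p := 1) (by linarith : -1 < -d) one_pos hr

lemma mul_integral_rpow_neg_mul_exp_neg_mul {d r : ℝ} (hd : d < 1) (hr : 0 < r) :
    r * ∫ t in Ioi (0 : ℝ), t ^ (-d) * exp (-(r * t)) = r ^ d * Gamma (1 - d) := by
  have h := integral_rpow_mul_exp_neg_mul_Ioi (a := 1 - d) (by linarith) hr
  rw [show 1 - d - 1 = -d by ring] at h
  rw [h, one_div, inv_rpow hr.le, ← rpow_neg hr.le, neg_sub, rpow_sub_one hr.ne']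
  field_simp

lemma one_sub_exp_neg_nonneg {x : ℝ} (hx : 0 ≤ x) : 0 ≤ 1 - exp (-x) :=
  sub_nonneg.2 (exp_le_one_iff.2 (neg_nonpos.2 hx))

lemma one_sub_exp_neg_le_self (x : ℝ) : 1 - exp (-x) ≤ x := by
  linarith [one_sub_le_exp_neg x]

section

variable {δ b : ℝ}

lemma hasDerivAt_one_sub_exp_neg_mul_rpow_mul_exp {s : ℝ} (hs : s ≠ 0) :
    HasDerivAt (fun s => (1 - exp (-s)) * s ^ (-δ) * exp (-(b * s)))
      ((b + 1) * (s ^ (-δ) * exp (-((b + 1) * s))) - b * (s ^ (-δ) * exp (-(b * s)))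
        - δ * ((1 - exp (-s)) * s ^ (-δ - 1) * exp (-(b * s)))) s := by
  have hone : HasDerivAt (fun s : ℝ => 1 - exp (-s)) (exp (-s)) s := by
    simpa using ((hasDerivAt_neg s).exp).const_sub 1
  have hexp : HasDerivAt (fun s : ℝ => exp (-(b * s))) (-b * exp (-(b * s))) s := by
    simpa [mul_comm] using (((hasDerivAt_id s).const_mul b).neg).exp
  have hpow : HasDerivAt (fun s : ℝ => s ^ (-δ)) (-δ * s ^ (-δ - 1)) s :=
    hasDerivAt_rpow_const (Or.inl hs)
  refine ((hone.mul hpow).mul hexp).congr_deriv ?_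
  rw [show -((b + 1) * s) = -s + -(b * s) by ring, exp_add, Pi.mul_apply]
  ring

lemma continuousWithinAt_one_sub_exp_neg_mul_rpow_mul_exp (hδ : δ < 1) (hb : 0 ≤ b) :
    ContinuousWithinAt (fun s => (1 - exp (-s)) * s ^ (-δ) * exp (-(b * s))) (Ici 0) 0 := by
  have hzero : (0 : ℝ) ^ (1 - δ) = 0 := zero_rpow (by linarith)
  have hbound : Tendsto (fun s : ℝ => s ^ (1 - δ)) (𝓝[Ici 0] 0) (𝓝 0) := by
    simpa [ContinuousWithinAt, hzero] using
      (continuousAt_rpow_const 0 (1 - δ) (Or.inr (by linarith))).continuousWithinAt (s := Ici 0)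
  simp only [ContinuousWithinAt, neg_zero, exp_zero, sub_self, zero_mul]
  refine squeeze_zero' ?_ ?_ hbound
  · filter_upwards [self_mem_nhdsWithin] with s (hs : 0 ≤ s)
    exact mul_nonneg (mul_nonneg (one_sub_exp_neg_nonneg hs) (rpow_nonneg hs _)) (exp_pos _).le
  · filter_upwards [self_mem_nhdsWithin] with s (hs : 0 ≤ s)
    have hexp : exp (-(b * s)) ≤ 1 := exp_le_one_iff.2 (by nlinarith)
    calc (1 - exp (-s)) * s ^ (-δ) * exp (-(b * s)) ≤ s * s ^ (-δ) * 1 := by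
          gcongr
          exact one_sub_exp_neg_le_self s
      _ = s ^ (1 - δ) := by
          rw [mul_one, sub_eq_add_neg, rpow_add' hs (by linarith), rpow_one]

lemma tendsto_one_sub_exp_neg_mul_rpow_mul_exp_atTop (hδ : 0 < δ) (hb : 0 < b) :
    Tendsto (fun s => (1 - exp (-s)) * s ^ (-δ) * exp (-(b * s))) atTop (𝓝 0) := by
  have hone : Tendsto (fun s : ℝ => 1 - exp (-s)) atTop (𝓝 (1 - 0)) :=
    tendsto_exp_neg_atTop_nhds_zero.const_sub 1
  have hexp : Tendsto (fun s : ℝ => exp (-(b * s))) atTop (𝓝 0) :=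
    tendsto_exp_neg_atTop_nhds_zero.comp (tendsto_id.const_mul_atTop hb)
  simpa using (hone.mul (tendsto_rpow_neg_atTop hδ)).mul hexp

lemma integrableOn_one_sub_exp_neg_mul_rpow_mul_exp (hδ : δ < 1) (hb : 0 < b) :
    IntegrableOn (fun s => (1 - exp (-s)) * s ^ (-δ - 1) * exp (-(b * s))) (Ioi 0) := by
  refine (integrableOn_rpow_neg_mul_exp_neg_mul hδ hb).mono' ?_ ?_
  · refine ContinuousOn.aestronglyMeasurable (fun s (hs : 0 < s) => ?_) measurableSet_Ioi
    exact (ContinuousAt.mul (by fun_prop) (continuousAt_rpow_const s _ (Or.inl hs.ne'))).mul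
      (by fun_prop) |>.continuousWithinAt
  · filter_upwards [ae_restrict_mem measurableSet_Ioi] with s (hs : 0 < s)
    rw [norm_of_nonneg (mul_nonneg (mul_nonneg (one_sub_exp_neg_nonneg hs.le)
      (rpow_nonneg hs.le _)) (exp_pos _).le)]
    calc (1 - exp (-s)) * s ^ (-δ - 1) * exp (-(b * s))
        ≤ s * s ^ (-δ - 1) * exp (-(b * s)) := by
          gcongr
          exact one_sub_exp_neg_le_self s
      _ = s ^ (-δ) * exp (-(b * s)) := by
          rw [rpow_sub_one hs.ne']
          field_simp

theorem integral_one_sub_exp_neg_mul_rpow_mul_exp (hδ₀ : 0 < δ) (hδ₁ : δ < 1) (hb : 0 < b) :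
    ∫ s in Ioi (0 : ℝ), (1 - exp (-s)) * s ^ (-δ - 1) * exp (-(b * s))
      = Gamma (1 - δ) / δ * ((b + 1) ^ δ - b ^ δ) := by
  have hb₁ : 0 < b + 1 := by linarith
  have hint₁ := integrableOn_rpow_neg_mul_exp_neg_mul hδ₁ hb₁
  have hint₂ := integrableOn_rpow_neg_mul_exp_neg_mul hδ₁ hb
  have hint := integrableOn_one_sub_exp_neg_mul_rpow_mul_exp hδ₁ hb
  have hint' : IntegrableOn (fun s => (b + 1) * (s ^ (-δ) * exp (-((b + 1) * s)))
      - b * (s ^ (-δ) * exp (-(b * s)))) (Ioi 0) :=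
    (hint₁.const_mul _).sub (hint₂.const_mul _)
  have hparts := integral_Ioi_of_hasDerivAt_of_tendsto
    (continuousWithinAt_one_sub_exp_neg_mul_rpow_mul_exp hδ₁ hb.le)
    (fun s (hs : 0 < s) => hasDerivAt_one_sub_exp_neg_mul_rpow_mul_exp hs.ne')
    (hint'.sub (hint.const_mul δ))
    (tendsto_one_sub_exp_neg_mul_rpow_mul_exp_atTop hδ₀ hb)
  rw [integral_sub hint' (hint.const_mul δ),
    integral_sub (hint₁.const_mul _) (hint₂.const_mul _), integral_const_mul, integral_const_mul,
    integral_const_mul, mul_integral_rpow_neg_mul_exp_neg_mul hδ₁ hb₁,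
    mul_integral_rpow_neg_mul_exp_neg_mul hδ₁ hb] at hparts
  simp only [neg_zero, exp_zero, sub_self, zero_mul] at hparts
  rw [div_mul_eq_mul_div, eq_div_iff hδ₀.ne']
  linear_combination -hparts

end

theorem levy_exponent_generalized_gamma_general
    (α ν b : ℝ) (hα : α ∈ Ioo (0:ℝ) 1) (hb : 0 < b)
    (hδ : α - ν ∈ Ioo (0:ℝ) α) :
    ∫ s in Ioi (0:ℝ),
        (1 - Real.exp (-s)) * (α / Real.Gamma (1 - α) * s ^ (ν - α - 1) * Real.exp (-(b * s)))
      = α * Real.Gamma (1 - (α - ν)) / ((α - ν) * Real.Gamma (1 - α)) *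
          ((b + 1) ^ (α - ν) - b ^ (α - ν)) := by
  have hΓ : Gamma (1 - α) ≠ 0 := (Gamma_pos_of_pos (by linarith [hα.2])).ne'
  have hrearrange : ∀ s : ℝ,
      (1 - exp (-s)) * (α / Gamma (1 - α) * s ^ (ν - α - 1) * exp (-(b * s)))
        = α / Gamma (1 - α) * ((1 - exp (-s)) * s ^ (-(α - ν) - 1) * exp (-(b * s))) := by
    intro s
    rw [show ν - α - 1 = -(α - ν) - 1 by ring]
    ring
  simp_rw [hrearrange]
  rw [integral_const_mul,
    integral_one_sub_exp_neg_mul_rpow_mul_exp hδ.1 (hδ.2.trans hα.2) hb]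
  field_simp

theorem levy_exponent_generalized_gamma
    (α ν b : ℝ) (hα : α ∈ Ioo (0:ℝ) 1) (hν : 0 < ν) (hb : 0 < b)
    (hδ : α - ν ∈ Ioo (0:ℝ) α) :
    ∫ s in Ioi (0:ℝ),
        (1 - Real.exp (-s)) * (α / Real.Gamma (1 - α) * s ^ (ν - α - 1) * Real.exp (-(b * s)))
      = α * Real.Gamma (1 - (α - ν)) / ((α - ν) * Real.Gamma (1 - α)) *
          ((b + 1) ^ (α - ν) - b ^ (α - ν)) :=
  levy_exponent_generalized_gamma_general α ν b hα hb hδ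
end
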